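/- Let n ≥ 1 and let D_n be the diamond-path graph: its vertex set is {N, S, E, W} × {1,...,n}, and its edges are N_iE_i, N_iW_i, S_iE_i, S_iW_i for each i ∈ {1,...,n}, together with E_iW_{i+1} for each i ∈ {1,...,n-1}. For a binary string b = b_1 ... b_n, let M_b be the edge set containing, for each i ∈ {1,...,n}, the two edges W_iN_i and E_iS_i if b_i = 0, and the two edges E_iN_i and W_iS_i if b_i = 1. Then: (i) for every binary string b of length n, M_b is a perfect matching of D_n; and (ii) for all binary strings b, b' of length n, the symmetric difference M_b Δ M_{b'} equals the edge set {N_iE_i, N_iW_i, S_iE_i, S_iW_i} of the 4-cycle on the i-th diamond for some i if and only if b and b' differ in exactly one position (namely position i); equivalently, M_b and M_{b'} differ in an alternating cycle if and only if the Hamming distance between b and b' equals 1. -/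
import Mathlib


/-- The four corner labels of a diamond. -/
inductive Dir : Type
  | N | S | E | W
deriving DecidableEq

/-- The edge set of the diamond-path graph `D_n`: for each `i`, the four diamond edges
`N_iE_i, N_iW_i, S_iE_i, S_iW_i`, together with the connecting edges `E_iW_{i+1}`. -/
def diamondEdges (n : ℕ) : Set (Sym2 (Dir × Fin n)) :=
  {e | (∃ i : Fin n,
        e = s((Dir.N, i), (Dir.E, i)) ∨ e = s((Dir.N, i), (Dir.W, i)) ∨
        e = s((Dir.S, i), (Dir.E, i)) ∨ e = s((Dir.S, i), (Dir.W, i))) ∨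
       (∃ (i : Fin n) (h : (i : ℕ) + 1 < n),
        e = s((Dir.E, i), (Dir.W, ⟨(i : ℕ) + 1, h⟩)))}

/-- The perfect matching `M_b`: for each `i`, the two edges `W_iN_i` and `E_iS_i` if
`b_i = 0`, and the two edges `E_iN_i` and `W_iS_i` if `b_i = 1`. -/
def matchingEdges {n : ℕ} (b : Fin n → Bool) : Set (Sym2 (Dir × Fin n)) :=
  {e | ∃ i : Fin n,
      (b i = false ∧ (e = s((Dir.W, i), (Dir.N, i)) ∨ e = s((Dir.E, i), (Dir.S, i)))) ∨
      (b i = true ∧ (e = s((Dir.E, i), (Dir.N, i)) ∨ e = s((Dir.W, i), (Dir.S, i))))}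

/-- The edge set `{N_iE_i, N_iW_i, S_iE_i, S_iW_i}` of the 4-cycle on the `i`-th diamond. -/
def diamondCycle {n : ℕ} (i : Fin n) : Set (Sym2 (Dir × Fin n)) :=
  {s((Dir.N, i), (Dir.E, i)), s((Dir.N, i), (Dir.W, i)),
   s((Dir.S, i), (Dir.E, i)), s((Dir.S, i), (Dir.W, i))}

lemma mem_symmDiff_iff {n : ℕ} (b b' : Fin n → Bool) (e : Sym2 (Dir × Fin n)) :
    e ∈ symmDiff (matchingEdges b) (matchingEdges b') ↔
      ∃ i : Fin n, b i ≠ b' i ∧ e ∈ diamondCycle i := by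
  rw [Set.mem_symmDiff]
  constructor
  · rintro (⟨⟨i, h⟩, h2⟩ | ⟨⟨i, h⟩, h2⟩)
    · refine ⟨i, fun hbb => h2 ⟨i, by rwa [hbb] at h⟩, ?_⟩
      rcases h with ⟨hb, he | he⟩ | ⟨hb, he | he⟩ <;> subst he <;>
        simp [diamondCycle, Sym2.eq_iff]
    · refine ⟨i, fun hbb => h2 ⟨i, by rwa [← hbb] at h⟩, ?_⟩
      rcases h with ⟨hb, he | he⟩ | ⟨hb, he | he⟩ <;> subst he <;>
        simp [diamondCycle, Sym2.eq_iff]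
  · rintro ⟨i, hne, he⟩
    simp only [diamondCycle, Set.mem_insert_iff, Set.mem_singleton_iff] at he
    have hmem : ∀ (c : Fin n → Bool), c i = false →
        (e = s((Dir.W, i), (Dir.N, i)) ∨ e = s((Dir.E, i), (Dir.S, i))) →
        e ∈ matchingEdges c := fun c hc h => ⟨i, Or.inl ⟨hc, h⟩⟩
    have hmem' : ∀ (c : Fin n → Bool), c i = true →
        (e = s((Dir.E, i), (Dir.N, i)) ∨ e = s((Dir.W, i), (Dir.S, i))) →
        e ∈ matchingEdges c := fun c hc h => ⟨i, Or.inr ⟨hc, h⟩⟩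
    have hnot : ∀ (c : Fin n → Bool), c i = false →
        (e = s((Dir.E, i), (Dir.N, i)) ∨ e = s((Dir.W, i), (Dir.S, i))) →
        e ∉ matchingEdges c := by
      rintro c hc h ⟨j, ⟨hj, hje⟩ | ⟨hj, hje⟩⟩ <;>
        rcases h with h | h <;> rcases hje with hje | hje <;> subst h <;>
        simp_all [Sym2.eq_iff, Prod.ext_iff] <;> simp_all
    have hnot' : ∀ (c : Fin n → Bool), c i = true →
        (e = s((Dir.W, i), (Dir.N, i)) ∨ e = s((Dir.E, i), (Dir.S, i))) →
        e ∉ matchingEdges c := by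
      rintro c hc h ⟨j, ⟨hj, hje⟩ | ⟨hj, hje⟩⟩ <;>
        rcases h with h | h <;> rcases hje with hje | hje <;> subst h <;>
        simp_all [Sym2.eq_iff, Prod.ext_iff] <;> simp_all
    -- normalize e into "pair class"
    cases hb : b i <;> cases hb' : b' i <;> simp_all
    · -- b i false, b' i true
      rcases he with h|h|h|h
      · exact Or.inr ⟨hmem' b' hb' (Or.inl (by rw [h, Sym2.eq_swap])),
          hnot b hb (Or.inl (by rw [h, Sym2.eq_swap]))⟩
      · exact Or.inl ⟨hmem b hb (Or.inl (by rw [h, Sym2.eq_swap])),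
          hnot' b' hb' (Or.inl (by rw [h, Sym2.eq_swap]))⟩
      · exact Or.inl ⟨hmem b hb (Or.inr (by rw [h, Sym2.eq_swap])), hnot' b' hb' (Or.inr (by rw [h, Sym2.eq_swap]))⟩
      · exact Or.inr ⟨hmem' b' hb' (Or.inr (by rw [h, Sym2.eq_swap])), hnot b hb (Or.inr (by rw [h, Sym2.eq_swap]))⟩
    · rcases he with h|h|h|h
      · exact Or.inl ⟨hmem' b hb (Or.inl (by rw [h, Sym2.eq_swap])),
          hnot b' hb' (Or.inl (by rw [h, Sym2.eq_swap]))⟩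
      · exact Or.inr ⟨hmem b' hb' (Or.inl (by rw [h, Sym2.eq_swap])),
          hnot' b hb (Or.inl (by rw [h, Sym2.eq_swap]))⟩
      · exact Or.inr ⟨hmem b' hb' (Or.inr (by rw [h, Sym2.eq_swap])), hnot' b hb (Or.inr (by rw [h, Sym2.eq_swap]))⟩
      · exact Or.inl ⟨hmem' b hb (Or.inr (by rw [h, Sym2.eq_swap])), hnot b' hb' (Or.inr (by rw [h, Sym2.eq_swap]))⟩

lemma diamondCycle_index {n : ℕ} {i j : Fin n} {e : Sym2 (Dir × Fin n)}
    (hi : e ∈ diamondCycle i) (hj : e ∈ diamondCycle j) : i = j := by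
  simp only [diamondCycle, Set.mem_insert_iff, Set.mem_singleton_iff] at hi hj
  rcases hi with h|h|h|h <;> subst h <;>
    simp_all [Sym2.eq_iff, Prod.ext_iff] <;> tauto

lemma part2 {n : ℕ} (b b' : Fin n → Bool) (i : Fin n) :
    symmDiff (matchingEdges b) (matchingEdges b') = diamondCycle i ↔
      (b i ≠ b' i ∧ ∀ j : Fin n, j ≠ i → b j = b' j) := by
  constructor
  · intro h
    have hNE : s((Dir.N, i), (Dir.E, i)) ∈ diamondCycle i := by simp [diamondCycle]
    rw [← h, mem_symmDiff_iff] at hNE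
    obtain ⟨j, hj, hje⟩ := hNE
    have hji : j = i := diamondCycle_index hje (by simp [diamondCycle])
    subst hji
    refine ⟨hj, fun k hk => ?_⟩
    by_contra hbk
    have : s((Dir.N, k), (Dir.E, k)) ∈ diamondCycle j := by
      rw [← h, mem_symmDiff_iff]; exact ⟨k, hbk, by simp [diamondCycle]⟩
    exact hk (diamondCycle_index (by simp [diamondCycle]) this)
  · rintro ⟨hne, heq⟩
    ext e
    rw [mem_symmDiff_iff]
    constructor
    · rintro ⟨j, hj, hje⟩
      rcases eq_or_ne j i with rfl | hji
      · exact hje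
      · exact absurd (heq j hji) hj
    · exact fun he => ⟨i, hne, he⟩

lemma part3 {n : ℕ} (b b' : Fin n → Bool) :
    (∃ i : Fin n, b i ≠ b' i ∧ ∀ j : Fin n, j ≠ i → b j = b' j) ↔
      hammingDist b b' = 1 := by
  rw [hammingDist, Finset.card_eq_one]
  constructor
  · rintro ⟨i, hi, hj⟩
    refine ⟨i, Finset.eq_singleton_iff_unique_mem.2 ⟨by simpa using hi, fun j hjm => ?_⟩⟩
    simp only [Finset.mem_filter, Finset.mem_univ, true_and] at hjm
    by_contra hne
    exact hjm (hj j hne)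
  · rintro ⟨i, hi⟩
    refine ⟨i, ?_, fun j hj => ?_⟩
    · have : i ∈ Finset.univ.filter fun j => b j ≠ b' j := hi ▸ Finset.mem_singleton_self i
      simpa using this
    · by_contra hne
      have : j ∈ Finset.univ.filter fun k => b k ≠ b' k := by simpa using hne
      rw [hi, Finset.mem_singleton] at this
      exact hj this

lemma part1sub {n : ℕ} (b : Fin n → Bool) : matchingEdges b ⊆ diamondEdges n := by
  rintro e ⟨i, ⟨hb, he | he⟩ | ⟨hb, he | he⟩⟩ <;> subst he <;>
    exact Or.inl ⟨i, by simp [Sym2.eq_iff]⟩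

def mEdge {n : ℕ} (b : Fin n → Bool) (v : Dir × Fin n) : Sym2 (Dir × Fin n) :=
  match v with
  | (Dir.N, i) => if b i then s((Dir.E, i), (Dir.N, i)) else s((Dir.W, i), (Dir.N, i))
  | (Dir.S, i) => if b i then s((Dir.W, i), (Dir.S, i)) else s((Dir.E, i), (Dir.S, i))
  | (Dir.E, i) => if b i then s((Dir.E, i), (Dir.N, i)) else s((Dir.E, i), (Dir.S, i))
  | (Dir.W, i) => if b i then s((Dir.W, i), (Dir.S, i)) else s((Dir.W, i), (Dir.N, i))

lemma part1uniq {n : ℕ} (b : Fin n → Bool) (v : Dir × Fin n) :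
    ∃! e : Sym2 (Dir × Fin n), e ∈ matchingEdges b ∧ v ∈ e := by
  obtain ⟨d, i⟩ := v
  refine ⟨mEdge b (d, i), ?_, ?_⟩
  · cases hb : b i <;> cases d <;>
      exact ⟨⟨i, by simp [mEdge, hb, Sym2.eq_iff]⟩, by simp [mEdge, hb]⟩
  · rintro e ⟨⟨j, ⟨hj, he | he⟩ | ⟨hj, he | he⟩⟩, hv⟩ <;> subst he <;>
      cases d <;> simp_all [mEdge, Sym2.mem_iff, Prod.ext_iff] <;>
      simp_all [Sym2.eq_iff]


/-- (i) for every binary string `b` of length `n`, `M_b` is a perfect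
matching of the diamond-path graph `D_n` (a set of edges of `D_n` such that every vertex
is incident to exactly one of them); (ii) for all `b, b'`, the symmetric difference
`M_b Δ M_{b'}` equals the edge set of the 4-cycle on the `i`-th diamond for some `i` iff
`b` and `b'` differ in exactly one position (namely position `i`); in particular this
happens for some `i` iff the Hamming distance between `b` and `b'` equals 1. -/
theorem matchingEdges_perfect_matching_and_cycle (n : ℕ) (hn : 1 ≤ n) :
    (∀ b : Fin n → Bool,
      matchingEdges b ⊆ diamondEdges n ∧
      ∀ v : Dir × Fin n, ∃! e : Sym2 (Dir × Fin n), e ∈ matchingEdges b ∧ v ∈ e) ∧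
    (∀ (b b' : Fin n → Bool) (i : Fin n),
      symmDiff (matchingEdges b) (matchingEdges b') = diamondCycle i ↔
        (b i ≠ b' i ∧ ∀ j : Fin n, j ≠ i → b j = b' j)) ∧
    (∀ b b' : Fin n → Bool,
      (∃ i : Fin n, symmDiff (matchingEdges b) (matchingEdges b') = diamondCycle i) ↔
        hammingDist b b' = 1) := by
  refine ⟨fun b => ⟨part1sub b, part1uniq b⟩, fun b b' i => part2 b b' i, fun b b' => ?_⟩
  constructor
  · rintro ⟨i, h⟩
    exact (part3 b b').1 ⟨i, (part2 b b' i).1 h⟩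
  · intro h
    obtain ⟨i, hi⟩ := (part3 b b').2 h
    exact ⟨i, (part2 b b' i).2 hi⟩
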